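/- arXiv:2104.09256 — 6 statements merged into one kernel-verified Lean document; each statement's English description precedes it below -/
import Mathlib

section
/- For any complex parameters A,B,C,D and any point p = (x,y,z) on the smooth locus of S_{A,B,C,D} that is a fixed point of an element γ of the group generated by g_x, g_y, g_z, the determinant of the derivative Dγ(p) (as a map of the tangent space of the surface) equals 1; equivalently, the generators g_x, g_y, g_z preserve the holomorphic 2-form Ω = dx∧dy/(2z+xy-C) on the smooth locus of S_{A,B,C,D}. -/
noncomputable section

/-- g_x = s_z ∘ s_y as a self-map of ℂ³ (here ℂ³ = Fin 3 → ℂ). -/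
def gxE (B C : ℂ) : Function.End (Fin 3 → ℂ) :=
  fun p => ![p 0, -p 1 - p 0 * p 2 + B, p 0 * p 1 + (p 0 ^ 2 - 1) * p 2 + C - B * p 0]

/-- g_y = s_x ∘ s_z as a self-map of ℂ³. -/
def gyE (A C : ℂ) : Function.End (Fin 3 → ℂ) :=
  fun p => ![(p 1 ^ 2 - 1) * p 0 + p 1 * p 2 + A - C * p 1, p 1, -p 1 * p 0 - p 2 + C]

/-- g_z = s_y ∘ s_x as a self-map of ℂ³. -/
def gzE (A B : ℂ) : Function.End (Fin 3 → ℂ) :=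
  fun p => ![-p 0 - p 1 * p 2 + A, p 2 * p 0 + (p 2 ^ 2 - 1) * p 1 + B - A * p 2, p 2]

/-- The affine cubic surface S_{A,B,C,D}. -/
def surf (A B C D : ℂ) : Set (Fin 3 → ℂ) :=
  {p | p 0 ^ 2 + p 1 ^ 2 + p 2 ^ 2 + p 0 * p 1 * p 2
    = A * p 0 + B * p 1 + C * p 2 + D}

/-- The gradient of the defining polynomial of S_{A,B,C,D}. -/
def gradf (A B C : ℂ) (p : Fin 3 → ℂ) : Fin 3 → ℂ :=
  ![2 * p 0 + p 1 * p 2 - A, 2 * p 1 + p 0 * p 2 - B, 2 * p 2 + p 0 * p 1 - C]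

/-!
Each generator is a product of two Vieta involutions `s_i p = p - ∂ᵢf(p) eᵢ`. The Jacobian of
`s_i` is `J = I - eᵢ hᵢᵀ`, where `hᵢ` is the `i`-th row of the Hessian of `f`, and `hᵢ ⬝ eᵢ = 2`;
the expansion of the vector triple product then gives `Jv × Jw = -Jᵀ (v × w)`, while
`∇f(s_i p) = Jᵀ ∇f(p)` because `∇f` is affine in the `i`-th coordinate. Since `v × w = Ω(v, w) ∇f`
for tangent vectors, each `s_i` multiplies `Ω` by `-1`, so every element of the monoid generated
by `g_x, g_y, g_z` preserves `Ω`; at a fixed point this is the determinant statement.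
-/

open Matrix

theorem cross_sub_smul_cross_sub_smul {R : Type*} [CommRing R] (e h v w : Fin 3 → R)
    (he : h ⬝ᵥ e = 2) :
    (v - (h ⬝ᵥ v) • e) ⨯₃ (w - (h ⬝ᵥ w) • e) = (e ⬝ᵥ v ⨯₃ w) • h - v ⨯₃ w := by
  calc (v - (h ⬝ᵥ v) • e) ⨯₃ (w - (h ⬝ᵥ w) • e)
      = v ⨯₃ w + e ⨯₃ (h ⨯₃ (v ⨯₃ w)) := by
        simp only [map_sub, LinearMap.sub_apply, map_smul, LinearMap.smul_apply, cross_self,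
          smul_zero, sub_zero, cross_cross_eq_smul_sub_smul', ← cross_anticomm v e]
        rw [dotProduct_comm v h]
        module
    _ = (e ⬝ᵥ v ⨯₃ w) • h - v ⨯₃ w := by
        rw [cross_cross_eq_smul_sub_smul', he]
        module

theorem cross_eq_smul_of_dotProduct_eq_zero {K : Type*} [Field K] {n v w : Fin 3 → K}
    (hn : n 2 ≠ 0) (hv : n ⬝ᵥ v = 0) (hw : n ⬝ᵥ w = 0) :
    v ⨯₃ w = ((v 0 * w 1 - v 1 * w 0) / n 2) • n := by
  simp only [vec3_dotProduct] at hv hw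
  funext k
  fin_cases k <;> simp [cross_apply] <;> field_simp
  · linear_combination v 1 * hw - w 1 * hv
  · linear_combination w 0 * hv - v 0 * hw

def hessf (p : Fin 3 → ℂ) : Matrix (Fin 3) (Fin 3) ℂ :=
  !![2, p 2, p 1; p 2, 2, p 0; p 1, p 0, 2]

theorem hasFDerivAt_gradf (A B C : ℂ) (p : Fin 3 → ℂ) :
    HasFDerivAt (gradf A B C) (Matrix.toLin' (hessf p)).toContinuousLinearMap p := by
  have h0 := hasFDerivAt_apply (𝕜 := ℂ) (0 : Fin 3) p
  have h1 := hasFDerivAt_apply (𝕜 := ℂ) (1 : Fin 3) p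
  have h2 := hasFDerivAt_apply (𝕜 := ℂ) (2 : Fin 3) p
  refine hasFDerivAt_pi'' fun i => ?_
  fin_cases i
  · convert ((h0.const_mul 2).add (h1.mul h2)).sub_const A using 1
    · funext q; simp [gradf]
    · ext v; simp [hessf, vecHead, vecTail]; ring
  · convert ((h1.const_mul 2).add (h0.mul h2)).sub_const B using 1
    · funext q; simp [gradf]
    · ext v; simp [hessf, vecHead, vecTail]; ring
  · convert ((h2.const_mul 2).add (h0.mul h1)).sub_const C using 1
    · funext q; simp [gradf]
    · ext v; simp [hessf, vecHead, vecTail]; ring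

theorem gradf_sub_smul_single (A B C : ℂ) (p : Fin 3 → ℂ) (i : Fin 3) (a : ℂ) :
    gradf A B C (p - a • Pi.single i 1) = gradf A B C p - a • hessf p i := by
  funext j
  fin_cases i <;> fin_cases j <;> simp [gradf, hessf] <;> ring

/-- The involution `s_i`; e.g. `s_x (x, y, z) = (A - yz - x, y, z)`. -/
def vieta (A B C : ℂ) (i : Fin 3) (p : Fin 3 → ℂ) : Fin 3 → ℂ :=
  p - gradf A B C p i • Pi.single i 1

/-- `γ^* Ω = c Ω` on every level set of `f`, with `Ω` encoded by `v × w = Ω_p(v, w) ∇f(p)`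
for `v, w` tangent at `p`. -/
def ScalesOmega (A B C c : ℂ) (γ : (Fin 3 → ℂ) → Fin 3 → ℂ) : Prop :=
  ∀ p, ∃ L : (Fin 3 → ℂ) →L[ℂ] Fin 3 → ℂ, HasFDerivAt γ L p ∧
    ∀ (t : ℂ) (v w : Fin 3 → ℂ),
      v ⨯₃ w = t • gradf A B C p → L v ⨯₃ L w = (c * t) • gradf A B C (γ p)

section ScalesOmega

variable {A B C : ℂ}

theorem scalesOmega_id : ScalesOmega A B C 1 id := fun p =>
  ⟨ContinuousLinearMap.id ℂ _, hasFDerivAt_id p, fun t v w h => by simpa using h⟩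

theorem ScalesOmega.comp {c d : ℂ} {γ δ : (Fin 3 → ℂ) → Fin 3 → ℂ} (hγ : ScalesOmega A B C c γ)
    (hδ : ScalesOmega A B C d δ) : ScalesOmega A B C (c * d) (γ ∘ δ) := by
  intro p
  obtain ⟨Lδ, hLδ, hδ⟩ := hδ p
  obtain ⟨Lγ, hLγ, hγ⟩ := hγ (δ p)
  refine ⟨Lγ.comp Lδ, hLγ.comp p hLδ, fun t v w h => ?_⟩
  simpa [mul_assoc] using hγ _ _ _ (hδ t v w h)

theorem scalesOmega_vieta (i : Fin 3) : ScalesOmega A B C (-1) (vieta A B C i) := by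
  intro p
  have hgrad_i := (hasFDerivAt_apply i _).comp p (hasFDerivAt_gradf A B C p)
  refine ⟨_, (hasFDerivAt_id p).sub (hgrad_i.smul_const (Pi.single i 1)), fun t v w h => ?_⟩
  have hii : hessf p i ⬝ᵥ Pi.single i 1 = 2 := by
    rw [dotProduct_single, mul_one]; fin_cases i <;> rfl
  have hrow : ∀ u, ((ContinuousLinearMap.proj i).comp
      (Matrix.toLin' (hessf p)).toContinuousLinearMap) u = hessf p i ⬝ᵥ u := fun u => rfl
  simp only [_root_.sub_apply, ContinuousLinearMap.coe_id', id,
    ContinuousLinearMap.smulRight_apply, hrow]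
  rw [cross_sub_smul_cross_sub_smul _ _ _ _ hii, h, vieta, gradf_sub_smul_single,
    dotProduct_smul, single_dotProduct, one_mul, smul_eq_mul]
  module

theorem ScalesOmega.area_fderiv {c : ℂ} {γ : (Fin 3 → ℂ) → Fin 3 → ℂ}
    (hγ : ScalesOmega A B C c γ) {p v w : Fin 3 → ℂ} (hp : 2 * p 2 + p 0 * p 1 - C ≠ 0)
    (hv : gradf A B C p ⬝ᵥ v = 0) (hw : gradf A B C p ⬝ᵥ w = 0) :
    fderiv ℂ γ p v 0 * fderiv ℂ γ p w 1 - fderiv ℂ γ p v 1 * fderiv ℂ γ p w 0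
      = c * ((v 0 * w 1 - v 1 * w 0) / (2 * p 2 + p 0 * p 1 - C))
          * (2 * γ p 2 + γ p 0 * γ p 1 - C) := by
  obtain ⟨L, hL, hlaw⟩ := hγ p
  have hcross := congrFun (hlaw _ v w (cross_eq_smul_of_dotProduct_eq_zero hp hv hw)) 2
  rw [hL.fderiv]
  simpa [cross_apply, gradf] using hcross

end ScalesOmega

theorem gxE_eq_vieta_comp (A B C : ℂ) : gxE B C = vieta A B C 2 ∘ vieta A B C 1 := by
  funext p j
  fin_cases j <;> simp [gxE, vieta, gradf] <;> ring

theorem gyE_eq_vieta_comp (A B C : ℂ) : gyE A C = vieta A B C 0 ∘ vieta A B C 2 := by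
  funext p j
  fin_cases j <;> simp [gyE, vieta, gradf] <;> ring

theorem gzE_eq_vieta_comp (A B C : ℂ) : gzE A B = vieta A B C 1 ∘ vieta A B C 0 := by
  funext p j
  fin_cases j <;> simp [gzE, vieta, gradf] <;> ring

def omegaPreserving (A B C : ℂ) : Submonoid (Function.End (Fin 3 → ℂ)) where
  carrier := {γ | ScalesOmega A B C 1 γ}
  one_mem' := scalesOmega_id
  mul_mem' {γ δ} hγ hδ := by
    have h := hγ.comp hδ
    rwa [mul_one] at h

theorem scalesOmega_vieta_comp_vieta (A B C : ℂ) (i j : Fin 3) :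
    ScalesOmega A B C 1 (vieta A B C i ∘ vieta A B C j) := by
  convert (scalesOmega_vieta i).comp (scalesOmega_vieta j)
  norm_num

theorem closure_generators_le_omegaPreserving (A B C : ℂ) :
    Submonoid.closure ({gxE B C, gyE A C, gzE A B} : Set (Function.End (Fin 3 → ℂ)))
      ≤ omegaPreserving A B C := by
  rw [Submonoid.closure_le]
  rintro g (rfl | rfl | rfl)
  · rw [SetLike.mem_coe, gxE_eq_vieta_comp A]; exact scalesOmega_vieta_comp_vieta A B C 2 1
  · rw [SetLike.mem_coe, gyE_eq_vieta_comp A B]; exact scalesOmega_vieta_comp_vieta A B C 0 2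
  · rw [SetLike.mem_coe, gzE_eq_vieta_comp A B C]; exact scalesOmega_vieta_comp_vieta A B C 1 0

/-- (1) Every element γ of the group generated by g_x, g_y, g_z has determinant of its
derivative, restricted to the tangent plane of the surface, equal to 1 at every smooth
fixed point on S (expressed, in the chart where the partial ∂f/∂z = 2z+xy-C is nonzero,
as invariance of the area element in the (x,y)-coordinates on tangent vectors);
equivalently (2) the generators preserve the holomorphic 2-form
Ω = dx∧dy/(2z+xy-C) on the smooth locus. -/
theorem stmt2 (A B C D : ℂ) :
    (∀ γ ∈ Submonoid.closure ({gxE B C, gyE A C, gzE A B} : Set (Function.End (Fin 3 → ℂ))),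
      ∀ p ∈ surf A B C D, γ p = p → gradf A B C p ≠ 0 →
        2 * p 2 + p 0 * p 1 - C ≠ 0 →
        ∀ v w : Fin 3 → ℂ,
          (∑ i, gradf A B C p i * v i) = 0 → (∑ i, gradf A B C p i * w i) = 0 →
          (fderiv ℂ (γ : (Fin 3 → ℂ) → (Fin 3 → ℂ)) p v) 0 *
              (fderiv ℂ (γ : (Fin 3 → ℂ) → (Fin 3 → ℂ)) p w) 1
            - (fderiv ℂ (γ : (Fin 3 → ℂ) → (Fin 3 → ℂ)) p v) 1 *
              (fderiv ℂ (γ : (Fin 3 → ℂ) → (Fin 3 → ℂ)) p w) 0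
            = v 0 * w 1 - v 1 * w 0)
    ∧
    (∀ g ∈ ({gxE B C, gyE A C, gzE A B} : Set (Function.End (Fin 3 → ℂ))),
      ∀ p ∈ surf A B C D, gradf A B C p ≠ 0 →
        2 * p 2 + p 0 * p 1 - C ≠ 0 →
        2 * g p 2 + g p 0 * g p 1 - C ≠ 0 →
        ∀ v w : Fin 3 → ℂ,
          (∑ i, gradf A B C p i * v i) = 0 → (∑ i, gradf A B C p i * w i) = 0 →
          ((fderiv ℂ (g : (Fin 3 → ℂ) → (Fin 3 → ℂ)) p v) 0 *
                (fderiv ℂ (g : (Fin 3 → ℂ) → (Fin 3 → ℂ)) p w) 1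
              - (fderiv ℂ (g : (Fin 3 → ℂ) → (Fin 3 → ℂ)) p v) 1 *
                (fderiv ℂ (g : (Fin 3 → ℂ) → (Fin 3 → ℂ)) p w) 0)
              / (2 * g p 2 + g p 0 * g p 1 - C)
            = (v 0 * w 1 - v 1 * w 0) / (2 * p 2 + p 0 * p 1 - C)) := by
  refine ⟨fun γ hγ p _ hfix _ hp v w hv hw => ?_, fun g hg p _ _ hp hgp v w hv hw => ?_⟩
  · rw [(closure_generators_le_omegaPreserving A B C hγ).area_fderiv hp hv hw, hfix, one_mul,
      div_mul_cancel₀ _ hp]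
  · have hg' := closure_generators_le_omegaPreserving A B C (Submonoid.subset_closure hg)
    rw [hg'.area_fderiv hp hv hw, one_mul, mul_div_cancel_right₀ _ hgp]

end
end

section
/- For every complex number D ≠ 4, the polynomial p(u) = u³ + 3u² - D has a root u ∈ ℂ with |u| > 2. -/
/-!
Substituting `u = w - 2` turns the cubic into `w³ - 3w² + (4 - D)`, whose roots `wᵢ` have
`∑ wᵢ = 3`, `∑ wᵢwⱼ = 0` and `∏ wᵢ = D - 4`. If every root `u` had `‖u‖ ≤ 2`, all `wᵢ` would
lie in the right half-plane. Writing `wᵢ = xᵢ + i yᵢ` with `∑ yᵢ = 0`, the real part of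
`∑ wᵢwⱼ` is `∑ xᵢxⱼ + (∑ yᵢ²) / 2`, a sum of nonnegative terms; its vanishing forces the `wᵢ`
to be real with at most one of them nonzero, so `D - 4 = ∏ wᵢ = 0`.
-/

open Polynomial

theorem IsAlgClosed.exists_quadratic_factorization {K : Type*} [Field K] [IsAlgClosed K]
    (p q : K) : ∃ b c : K, ∀ u, u ^ 2 + p * u + q = (u - b) * (u - c) := by
  have hdeg : (X ^ 2 + C p * X + C q).degree = 2 := by compute_degree!
  obtain ⟨b, hb⟩ := IsAlgClosed.exists_root _ (hdeg ▸ two_ne_zero)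
  refine ⟨b, -p - b, fun u => ?_⟩
  simp only [IsRoot, eval_add, eval_pow, eval_mul, eval_C, eval_X] at hb
  linear_combination hb

theorem IsAlgClosed.exists_cubic_factorization {K : Type*} [Field K] [IsAlgClosed K]
    (p q r : K) : ∃ a b c : K, ∀ u, u ^ 3 + p * u ^ 2 + q * u + r = (u - a) * (u - b) * (u - c) := by
  have hdeg : (X ^ 3 + C p * X ^ 2 + C q * X + C r).degree = 3 := by compute_degree!
  obtain ⟨a, ha⟩ := IsAlgClosed.exists_root _ (hdeg ▸ three_ne_zero)
  simp only [IsRoot, eval_add, eval_pow, eval_mul, eval_C, eval_X] at ha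
  obtain ⟨b, c, hbc⟩ := exists_quadratic_factorization (a + p) (a ^ 2 + p * a + q)
  refine ⟨a, b, c, fun u => ?_⟩
  rw [mul_assoc, ← hbc]
  linear_combination ha

namespace Complex

theorem mul_mul_eq_zero_of_re_nonneg {a b c : ℂ} (ha : 0 ≤ a.re) (hb : 0 ≤ b.re) (hc : 0 ≤ c.re)
    (hsum : (a + b + c).im = 0) (hpair : (a * b + a * c + b * c).re ≤ 0) : a * b * c = 0 := by
  have hpair_eq : (a * b + a * c + b * c).re = (a.re * b.re + a.re * c.re + b.re * c.re)
      + (a.im ^ 2 + b.im ^ 2 + c.im ^ 2) / 2 - (a + b + c).im ^ 2 / 2 := by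
    simp only [add_re, add_im, mul_re]; ring
  rw [hpair_eq, hsum] at hpair
  have hab : a.re * b.re = 0 := by
    nlinarith [mul_nonneg ha hb, mul_nonneg ha hc, mul_nonneg hb hc, sq_nonneg a.im,
      sq_nonneg b.im, sq_nonneg c.im]
  have him : a.im = 0 ∧ b.im = 0 ∧ c.im = 0 := by
    refine ⟨?_, ?_, ?_⟩ <;>
      nlinarith [mul_nonneg ha hb, mul_nonneg ha hc, mul_nonneg hb hc, sq_nonneg a.im,
        sq_nonneg b.im, sq_nonneg c.im]
  obtain ⟨ha', hb', hc'⟩ := him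
  apply Complex.ext <;> simp [mul_re, mul_im, ha', hb', hc', hab]

theorem re_nonneg_of_norm_sub_two_le {w : ℂ} (hw : ‖w - 2‖ ≤ 2) : 0 ≤ w.re := by
  have := neg_le_of_abs_le ((abs_re_le_norm (w - 2)).trans hw)
  simp only [sub_re, re_ofNat] at this
  linarith

end Complex

theorem stmt4 (D : ℂ) (hD : D ≠ 4) :
    ∃ u : ℂ, u ^ 3 + 3 * u ^ 2 - D = 0 ∧ 2 < ‖u‖ := by
  by_contra! hsmall
  obtain ⟨a, b, c, hfac⟩ := IsAlgClosed.exists_cubic_factorization (-3 : ℂ) 0 (4 - D)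
  have hroot : ∀ w, (w - a) * (w - b) * (w - c) = 0 → 0 ≤ w.re := fun w hw =>
    Complex.re_nonneg_of_norm_sub_two_le (hsmall _ (by linear_combination hfac w + hw))
  have h0 := hfac 0
  have h1 := hfac 1
  have h2 := hfac (-1)
  have hsum : a + b + c = 3 := by linear_combination (h1 + h2 - 2 * h0) / 2
  have hpair : a * b + a * c + b * c = 0 := by linear_combination (h2 - h1) / 2
  apply hD
  have hprod := Complex.mul_mul_eq_zero_of_re_nonneg (hroot a (by ring)) (hroot b (by ring))
    (hroot c (by ring)) (by rw [hsum]; simp) (by rw [hpair]; simp)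
  linear_combination hprod - h0
end

section
/- For any real a ∈ (-2,2), the polynomial p_a(u) = u³ + 3u² - 3(2a+4)u + a² + 8a + 8 has a real root u₀ < -(2 + √(2a+4)). -/
/-!
With `s = √(2a + 4)`, so that `a = (s² - 4)/2`, the cubic takes the value `s²(s² + 8s + 20)/4 > 0`
at `-(2 + s)`, while it is negative at `-8 < -(2 + s)`; the intermediate value theorem gives the root.
-/

def diagonalCubic (a u : ℝ) : ℝ :=
  u ^ 3 + 3 * u ^ 2 - 3 * (2 * a + 4) * u + a ^ 2 + 8 * a + 8

theorem continuous_diagonalCubic (a : ℝ) : Continuous (diagonalCubic a) := by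
  unfold diagonalCubic
  fun_prop

theorem diagonalCubic_neg_two_sub {a s : ℝ} (hs : s ^ 2 = 2 * a + 4) :
    diagonalCubic a (-(2 + s)) = s ^ 2 * (s ^ 2 + 8 * s + 20) / 4 := by
  unfold diagonalCubic
  linear_combination (-(a + s ^ 2 / 2 + 18 + 6 * s) / 2) * hs

theorem diagonalCubic_neg_two_sub_pos {a s : ℝ} (hs : s ^ 2 = 2 * a + 4) (hs0 : 0 < s) :
    0 < diagonalCubic a (-(2 + s)) := by
  rw [diagonalCubic_neg_two_sub hs]
  positivity

theorem diagonalCubic_neg_eight_neg {a : ℝ} (ha : a ∈ Set.Ioo (-2 : ℝ) 2) :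
    diagonalCubic a (-8) < 0 := by
  obtain ⟨ha1, ha2⟩ := ha
  unfold diagonalCubic
  nlinarith

theorem stmt5 (a : ℝ) (ha : a ∈ Set.Ioo (-2 : ℝ) 2) :
    ∃ u₀ : ℝ, u₀ ^ 3 + 3 * u₀ ^ 2 - 3 * (2 * a + 4) * u₀ + a ^ 2 + 8 * a + 8 = 0 ∧
      u₀ < -(2 + Real.sqrt (2 * a + 4)) := by
  set s := Real.sqrt (2 * a + 4)
  have hs : s ^ 2 = 2 * a + 4 := Real.sq_sqrt (by linarith [ha.1])
  have hs0 : 0 < s := Real.sqrt_pos.2 (by linarith [ha.1])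
  have hle : (-8 : ℝ) ≤ -(2 + s) := by nlinarith [ha.2]
  obtain ⟨u₀, hu₀, hroot⟩ := intermediate_value_Ioo hle (continuous_diagonalCubic a).continuousOn
    ⟨diagonalCubic_neg_eight_neg ha, diagonalCubic_neg_two_sub_pos hs hs0⟩
  exact ⟨u₀, hroot, hu₀.2⟩
end

section
/- For the Picard parameters (A,B,C,D) = (0,0,0,4), the semiconjugacy Φ∘η_M = f_M∘Φ holds for each generator: with Φ(u,v) = (-u-1/u, -v-1/v, -u/v-v/u), the monomial map η(u,v) = (u, u⁻²v) satisfies Φ∘η = g_x∘Φ, where g_x(x,y,z) = (x, -y-xz, xy+(x²-1)z). -/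
noncomputable section

/-- The map Φ : ℂ*×ℂ* → S_{0,0,0,4}. -/
def PhiMap : ℂ × ℂ → ℂ × ℂ × ℂ :=
  fun p => (-p.1 - 1 / p.1, -p.2 - 1 / p.2, -p.1 / p.2 - p.2 / p.1)

/-- The monomial map associated with the matrix [[1,0],[-2,1]] ∈ Γ(2). -/
def etaMap : ℂ × ℂ → ℂ × ℂ :=
  fun p => (p.1, p.1⁻¹ ^ 2 * p.2)

/-- g_x with parameters A = B = C = 0. -/
def gx0 : ℂ × ℂ × ℂ → ℂ × ℂ × ℂ :=
  fun p => (p.1, -p.2.1 - p.1 * p.2.2, p.1 * p.2.1 + (p.1 ^ 2 - 1) * p.2.2)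

/-- The semiconjugacy Φ∘η = g_x∘Φ on ℂ*×ℂ* for the Picard parameters. -/
theorem stmt13 (u v : ℂ) (hu : u ≠ 0) (hv : v ≠ 0) :
    PhiMap (etaMap (u, v)) = gx0 (PhiMap (u, v)) := by
  simp only [PhiMap, etaMap, gx0, Prod.mk.injEq, true_and]
  constructor <;> field_simp <;> ring

end
end

section
/- The set of eigendirections in ℙ¹(ℝ) of hyperbolic elements of the congruence subgroup Γ(2) ≤ SL(2,ℤ) is dense in ℙ¹(ℝ). -/
/-!
If `a` is not a square and `B ≠ 0`, a nontrivial solution of Pell's equation `X² - 4aB²k² = 1`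
gives the hyperbolic matrix `[[X, 2B²k], [2ak, X]] ∈ Γ(2)`, whose eigenvector `(B, √a)` has
eigenvalue `X + 2kB√a`; multiplying the off-diagonal entries by `τσ` (`τ, σ = ±1`) moves the
eigenvector to `(τB, σ√a)`.
Since one of two consecutive positive integers is not a square, the vectors `(±B, ±√a)` come
within a bounded distance of every point of `ℝ²`, and rescaling approximates every direction.
-/

def inGamma2 (M : Matrix (Fin 2) (Fin 2) ℤ) : Prop :=
  M.det = 1 ∧ Odd (M 0 0) ∧ Odd (M 1 1) ∧ Even (M 0 1) ∧ Even (M 1 0)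

theorem inGamma2_of_sq_sub_four_mul_eq_one {X u v : ℤ} (h : X ^ 2 - 4 * u * v = 1) :
    inGamma2 !![X, 2 * u; 2 * v, X] := by
  have hX : Odd X :=
    (Int.odd_pow.mp ⟨2 * u * v, by linear_combination h⟩).resolve_right two_ne_zero
  refine ⟨?_, ?_, ?_, ?_, ?_⟩
  · rw [Matrix.det_fin_two_of]
    linear_combination h
  all_goals simp [hX]

theorem not_isSquare_four_mul_mul_sq {a : ℕ} (ha : ¬IsSquare a) {B : ℕ} (hB : B ≠ 0) :
    ¬IsSquare (4 * a * B ^ 2 : ℤ) := by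
  have hsqrt : √((4 * a * B ^ 2 : ℤ) : ℝ) = (2 * B : ℕ) * √a := by
    push_cast
    rw [Real.sqrt_mul (by positivity), Real.sqrt_mul' _ (by positivity),
      Real.sqrt_sq (by positivity), show (4 : ℝ) = 2 ^ 2 by norm_num, Real.sqrt_sq zero_le_two]
    ring
  rw [← irrational_sqrt_intCast_iff_of_nonneg (by positivity), hsqrt]
  exact (irrational_sqrt_natCast_iff.mpr ha).natCast_mul (by positivity)

theorem exists_hyperbolic_inGamma2_mulVec_eq_smul (τ σ : ℤˣ) {a B : ℕ} (ha : ¬IsSquare a)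
    (hB : B ≠ 0) :
    ∃ (M : Matrix (Fin 2) (Fin 2) ℤ) (c : ℝ), inGamma2 M ∧ 2 < |M 0 0 + M 1 1| ∧
      (M.map (Int.cast : ℤ → ℝ)).mulVec ![(τ : ℝ) * B, (σ : ℝ) * √a] =
        c • ![(τ : ℝ) * B, (σ : ℝ) * √a] := by
  have ha0 : a ≠ 0 := by rintro rfl; exact ha IsSquare.zero
  obtain ⟨X, k, hXk, hk⟩ :=
    Pell.exists_of_not_isSquare (by positivity) (not_isSquare_four_mul_mul_sq ha hB)
  have hτ := Int.units_coe_mul_self τ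
  have hσ := Int.units_coe_mul_self σ
  refine ⟨!![X, 2 * (τ * σ * B ^ 2 * k); 2 * (τ * σ * a * k), X], X + 2 * k * B * √a,
    inGamma2_of_sq_sub_four_mul_eq_one ?_, ?_, ?_⟩
  · linear_combination hXk - 4 * a * B ^ 2 * k ^ 2 * (σ * σ * hτ + hσ)
  · have hX : 1 < |X| := by
      have : 0 < (a : ℤ) * B ^ 2 * k ^ 2 := by positivity
      rw [← one_lt_sq_iff_one_lt_abs]
      linarith
    show 2 < |X + X|
    rw [← two_mul, abs_mul, abs_two]
    linarith
  · have hτR : (τ : ℝ) * τ = 1 := by exact_mod_cast hτ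
    have hσR : (σ : ℝ) * σ = 1 := by exact_mod_cast hσ
    have hsqrt : √(a : ℝ) ^ 2 = a := Real.sq_sqrt a.cast_nonneg
    ext i
    fin_cases i <;> simp [Matrix.mulVec, dotProduct, Fin.sum_univ_two]
    · linear_combination 2 * τ * B ^ 2 * k * √a * hσR
    · linear_combination 2 * σ * a * k * B * hτR - 2 * σ * k * B * hsqrt

theorem not_isSquare_succ_of_isSquare {n : ℕ} (hn : n ≠ 0) (h : IsSquare n) :
    ¬IsSquare (n + 1) := by
  obtain ⟨m, rfl⟩ := h
  rintro ⟨t, ht⟩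
  refine Nat.not_exists_sq (m := m) (by omega) ?_ ⟨t, ht.symm⟩
  have : 0 < m := Nat.pos_of_ne_zero (by rintro rfl; simp at hn)
  nlinarith

theorem exists_ne_zero_abs_natCast_sub_le {y : ℝ} (hy : 0 ≤ y) :
    ∃ B : ℕ, B ≠ 0 ∧ |(B : ℝ) - y| ≤ 1 := by
  refine ⟨⌊y⌋₊ + 1, Nat.succ_ne_zero _, abs_le.mpr ⟨?_, ?_⟩⟩ <;> push_cast
  · linarith [Nat.lt_floor_add_one y]
  · linarith [Nat.floor_le hy]

theorem exists_not_isSquare_abs_sqrt_sub_le {y : ℝ} (hy : 0 ≤ y) :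
    ∃ a : ℕ, ¬IsSquare a ∧ |√(a : ℝ) - y| ≤ 2 := by
  set A := ⌊y ^ 2⌋₊ + 1
  have hlo : y ^ 2 ≤ A := by push_cast [A]; linarith [Nat.lt_floor_add_one (y ^ 2)]
  have hhi : (A : ℝ) + 1 ≤ (y + 2) ^ 2 := by
    push_cast [A]; nlinarith [Nat.floor_le (sq_nonneg y)]
  have near : ∀ a : ℕ, A ≤ a → a ≤ A + 1 → |√(a : ℝ) - y| ≤ 2 := by
    intro a h₁ h₂
    have h₁ : (A : ℝ) ≤ a := by exact_mod_cast h₁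
    have h₂ : (a : ℝ) ≤ A + 1 := by exact_mod_cast h₂
    rw [abs_le]
    constructor
    · linarith [Real.le_sqrt_of_sq_le (hlo.trans h₁)]
    · linarith [(Real.sqrt_le_left (by linarith)).mpr (h₂.trans hhi)]
  by_cases hA : IsSquare A
  · exact ⟨A + 1, not_isSquare_succ_of_isSquare (Nat.succ_ne_zero _) hA,
      near _ le_self_add le_rfl⟩
  · exact ⟨A, hA, near _ le_rfl le_self_add⟩

theorem exists_units_abs_mul_sub_le {P : ℕ → Prop} {f : ℕ → ℝ} {δ : ℝ}
    (h : ∀ y, 0 ≤ y → ∃ n, P n ∧ |f n - y| ≤ δ) (y : ℝ) :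
    ∃ (σ : ℤˣ) (n : ℕ), P n ∧ |σ * f n - y| ≤ δ := by
  obtain ⟨n, hn, hδ⟩ := h |y| (abs_nonneg y)
  rcases abs_choice y with hy | hy
  · exact ⟨1, n, hn, by simpa [hy] using hδ⟩
  · refine ⟨-1, n, hn, ?_⟩
    rw [← abs_neg]
    convert hδ using 2
    push_cast
    linarith

/-- The eigendirections of hyperbolic elements of Γ(2) are dense in ℙ¹(ℝ):
for every nonzero direction w and every ε > 0 there is a hyperbolic M ∈ Γ(2)
with a real eigenvector x some scalar multiple of which is ε-close to w. -/
theorem stmt14 :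
    ∀ w : Fin 2 → ℝ, w ≠ 0 → ∀ ε : ℝ, 0 < ε →
      ∃ (M : Matrix (Fin 2) (Fin 2) ℤ) (x : Fin 2 → ℝ) (c t : ℝ),
        inGamma2 M ∧ 2 < |M 0 0 + M 1 1| ∧ x ≠ 0 ∧
        (M.map (Int.cast : ℤ → ℝ)).mulVec x = c • x ∧
        ‖t • x - w‖ < ε := by
  intro w _ ε hε
  set R := 3 / ε
  have hR : 0 < R := by positivity
  obtain ⟨τ, B, hB, hBw⟩ :=
    exists_units_abs_mul_sub_le (fun _ ↦ exists_ne_zero_abs_natCast_sub_le) (R * w 0)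
  obtain ⟨σ, a, ha, haw⟩ :=
    exists_units_abs_mul_sub_le (fun _ ↦ exists_not_isSquare_abs_sqrt_sub_le) (R * w 1)
  obtain ⟨M, c, hM, htr, hMx⟩ := exists_hyperbolic_inGamma2_mulVec_eq_smul τ σ ha hB
  refine ⟨M, _, c, R⁻¹, hM, htr, fun hx ↦ ?_, hMx, ?_⟩
  · exact hB (by simpa using congrFun hx 0)
  · have hxw : ‖![(τ : ℝ) * B, (σ : ℝ) * √a] - R • w‖ ≤ 2 := by
      refine pi_norm_le_iff_of_nonneg zero_le_two |>.mpr fun i ↦ ?_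
      fin_cases i
      · simpa using hBw.trans one_le_two
      · simpa using haw
    calc ‖R⁻¹ • ![(τ : ℝ) * B, (σ : ℝ) * √a] - w‖
        = R⁻¹ * ‖![(τ : ℝ) * B, (σ : ℝ) * √a] - R • w‖ := by
          rw [← norm_smul_of_nonneg (inv_nonneg.mpr hR.le), smul_sub, inv_smul_smul₀ hR.ne']
      _ ≤ R⁻¹ * 2 := by gcongr
      _ < ε := by simp only [R, inv_div]; linarith
end

section
/- Let A,B,C ∈ ℂ, r = max{|A|,|B|,|C|}, R > 2+√r, and ε = min{R-(2+√r), R+1-√(4R+r+1)}. Then ε > 0, and for any point q = (x,y,z) ∈ ℂ³ with |x-u| < ε, |y-u| < ε, |z-u| < ε for some u with |u| = R, the point s_x(q) = (-x-yz+A, y, z) satisfies |−x−yz+A| > (R-ε)² - (R+ε) - r ≥ R+ε > |x|; i.e., applying s_x strictly increases the modulus of the x-coordinate. -/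
/-!
With t = R - ε, the middle inequality (R-ε)² - (R+ε) - r ≥ R+ε is (t+1)² ≥ 4R+r+1, i.e. exactly
ε ≤ R + 1 - √(4R+r+1); positivity of this bound reduces to R² - 2R > r, which follows from
R - 2 > √r. On the polydisc, |y|, |z| > R - ε > 0 and |x| < R + ε, so
|-x-yz+A| ≥ |y||z| - |x| - |A| > (R-ε)² - (R+ε) - r.
-/

open Real

theorem sub_lt_norm_of_norm_sub_lt {E : Type*} [SeminormedAddCommGroup E] {u w : E} {ε : ℝ}
    (h : ‖w - u‖ < ε) : ‖u‖ - ε < ‖w‖ := by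
  linarith [norm_sub_norm_le u w, norm_sub_rev u w]

theorem norm_mul_sub_norm_sub_norm_le_norm_neg_sub_mul_add {α : Type*}
    [NonUnitalSeminormedRing α] [NormMulClass α] (a x y z : α) :
    ‖y‖ * ‖z‖ - ‖x‖ - ‖a‖ ≤ ‖-x - y * z + a‖ := by
  have h := norm_sub_norm_le (-(y * z)) (x - a)
  rw [norm_neg, norm_mul, show -(y * z) - (x - a) = -x - y * z + a by abel] at h
  linarith [norm_sub_le x a]

theorem sqrt_four_mul_add_add_one_lt {R r : ℝ} (hr : 0 ≤ r) (hR : 2 + √r < R) :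
    √(4 * R + r + 1) < R + 1 := by
  have hs := sq_sqrt hr
  rw [sqrt_lt' (by linarith [sqrt_nonneg r])]
  nlinarith [sqrt_nonneg r]

theorem add_le_sq_sub_sub_add_sub_of_le_sub_sqrt {R r ε : ℝ}
    (hε : ε ≤ R + 1 - √(4 * R + r + 1)) :
    R + ε ≤ (R - ε) ^ 2 - (R + ε) - r := by
  have h : 4 * R + r + 1 ≤ (R - ε + 1) ^ 2 := (sqrt_le_iff.1 (by linarith)).2
  linear_combination h

/-- Base estimate for the Bowditch region: with r = max{|A|,|B|,|C|}, R > 2+√r and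
ε = min{R-(2+√r), R+1-√(4R+r+1)}, one has ε > 0, and for any point (x,y,z) in the
ε-polydisc around (u,u,u) with |u| = R, the new x-coordinate -x-yz+A of s_x(x,y,z)
satisfies |-x-yz+A| > (R-ε)² - (R+ε) - r ≥ R+ε > |x|. -/
theorem stmt18 (A B C : ℂ) (R r ε : ℝ)
    (hr : r = max (‖A‖) (max (‖B‖) (‖C‖)))
    (hR : 2 + Real.sqrt r < R)
    (hε : ε = min (R - (2 + Real.sqrt r)) (R + 1 - Real.sqrt (4 * R + r + 1))) :
    0 < ε ∧
    ∀ u x y z : ℂ, ‖u‖ = R →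
      ‖x - u‖ < ε → ‖y - u‖ < ε → ‖z - u‖ < ε →
      ‖-x - y * z + A‖ > (R - ε) ^ 2 - (R + ε) - r ∧
      (R - ε) ^ 2 - (R + ε) - r ≥ R + ε ∧
      R + ε > ‖x‖ := by
  have hA : ‖A‖ ≤ r := hr ▸ le_max_left _ _
  have hr0 : 0 ≤ r := (norm_nonneg A).trans hA
  have hε_lt : ε < R := (hε ▸ min_le_left _ _ : ε ≤ _).trans_lt (by linarith [sqrt_nonneg r])
  have hε_le : ε ≤ R + 1 - √(4 * R + r + 1) := hε ▸ min_le_right _ _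
  have hε_pos : 0 < ε :=
    hε ▸ lt_min (by linarith) (by linarith [sqrt_four_mul_add_add_one_lt hr0 hR])
  refine ⟨hε_pos, fun u x y z hu hx hy hz => ?_⟩
  have hxR : ‖x‖ < R + ε := hu ▸ norm_lt_of_mem_ball (mem_ball_iff_norm.2 hx)
  have hy' : R - ε < ‖y‖ := hu ▸ sub_lt_norm_of_norm_sub_lt hy
  have hz' : R - ε < ‖z‖ := hu ▸ sub_lt_norm_of_norm_sub_lt hz
  have hyz : (R - ε) ^ 2 < ‖y‖ * ‖z‖ := by
    rw [sq]; exact mul_lt_mul'' hy' hz' (by linarith) (by linarith)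
  refine ⟨?_, add_le_sq_sub_sub_add_sub_of_le_sub_sqrt hε_le, hxR⟩
  linarith [norm_mul_sub_norm_sub_norm_le_norm_neg_sub_mul_add A x y z]
end
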